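/- Let n ≥ 1 and set n' = n − d⁻(v_n) − d⁻(v_{n − d⁻(v_n)}) − 1, where d⁻ denotes in-degree in the infinite Jaco graph J_∞(1). If n' ≥ 1, then the domination numbers of the underlying graphs of the finite Jaco graphs satisfy γ(J_n(1)) = γ(J_{n'}(1)) + 1. -/

import Mathlib

open SimpleGraph

/-- In-degree of vertex `j` in the infinite Jaco graph `J_∞(1)`:
the number of `i < j` with an arc `(v_i, v_j)`, i.e. `i < j` and `j ≤ 2i - d⁻(v_i)`. -/
noncomputable def jacoInDeg (j : ℕ) : ℕ :=
  Nat.strongRecOn j fun j ih =>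
    ((Finset.range j).attach.filter
      (fun i => j ≤ 2 * i.1 - ih i.1 (Finset.mem_range.mp i.2))).card

/-- Out-degree of vertex `i` in `J_∞(1)`: the number of `j` with `i < j ≤ 2i - d⁻(v_i)`. -/
noncomputable def jacoOutDeg (i : ℕ) : ℕ := (Finset.Ioc i (2 * i - jacoInDeg i)).card

/-- The underlying (undirected, simple) graph of the infinite Jaco graph `J_∞(1)` on `ℕ`,
with vertex `i` playing the role of `v_i`. -/
def JacoInf : SimpleGraph ℕ where
  Adj i j := (i < j ∧ j ≤ 2 * i - jacoInDeg i) ∨ (j < i ∧ i ≤ 2 * j - jacoInDeg j)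
  symm := ⟨fun i j h => Or.symm h⟩
  loopless := ⟨fun i h => by rcases h with ⟨h, -⟩ | ⟨h, -⟩ <;> omega⟩

/-- The underlying graph of the finite Jaco graph `J_n(1)`: the subgraph of `J_∞(1)`
induced by `{v_1, …, v_n}`, with `(k : Fin n)` representing `v_{k+1}`. -/
def Jaco (n : ℕ) : SimpleGraph (Fin n) := JacoInf.comap (fun k => (k : ℕ) + 1)

/-- `s` is an independent set of `G`. -/
def IsIndepSet {V : Type*} (G : SimpleGraph V) (s : Set V) : Prop :=
  s.Pairwise fun a b => ¬ G.Adj a b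

/-- The independence number of `G`. -/
noncomputable def indepNum {V : Type*} [Fintype V] (G : SimpleGraph V) : ℕ :=
  sSup {k | ∃ s : Set V, _root_.IsIndepSet G s ∧ s.ncard = k}

/-- `s` is a vertex cover of `G`: it meets every edge. -/
def IsVertexCover {V : Type*} (G : SimpleGraph V) (s : Set V) : Prop :=
  ∀ ⦃a b : V⦄, G.Adj a b → a ∈ s ∨ b ∈ s

/-- The vertex covering number of `G`. -/
noncomputable def coverNum {V : Type*} [Fintype V] (G : SimpleGraph V) : ℕ :=
  sInf {k | ∃ s : Set V, _root_.IsVertexCover G s ∧ s.ncard = k}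

/-- `s` is a dominating set of `G`. -/
def IsDomSet {V : Type*} (G : SimpleGraph V) (s : Set V) : Prop :=
  ∀ v ∉ s, ∃ u ∈ s, G.Adj u v

/-- The domination number `γ(G)`. -/
noncomputable def domNum {V : Type*} [Fintype V] (G : SimpleGraph V) : ℕ :=
  sInf {k | ∃ s : Set V, IsDomSet G s ∧ s.ncard = k}

/-- The murtage number `m(G)`: the minimum number of edges whose addition to `G`
strictly decreases the domination number (and `0` when `γ(G) = 1`). -/
noncomputable def murtage {V : Type*} [Fintype V] (G : SimpleGraph V) : ℕ :=
  if domNum G = 1 then 0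
  else sInf {k | ∃ H : SimpleGraph V, G ≤ H ∧ domNum H < domNum G ∧
        (H.edgeSet \ G.edgeSet).ncard = k}

/-- `γ⁻(G)`: the minimum number of vertices whose removal strictly decreases
the domination number. -/
noncomputable def gammaMinus {V : Type*} [Fintype V] (G : SimpleGraph V) : ℕ :=
  sInf {k | ∃ s : Set V, s.ncard = k ∧
        @domNum _ (Set.toFinite sᶜ).fintype (G.induce sᶜ) < domNum G}

/-- The bondage number `b(G)`: the minimum number of edges whose removal strictly
increases the domination number. -/
noncomputable def bondage {V : Type*} [Fintype V] (G : SimpleGraph V) : ℕ :=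
  sInf {k | ∃ H : SimpleGraph V, H ≤ G ∧ domNum G < domNum H ∧
        (G.edgeSet \ H.edgeSet).ncard = k}

/-- The maximum degree `Δ(G)`. -/
noncomputable def maxDeg {V : Type*} [Fintype V] (G : SimpleGraph V) : ℕ :=
  Finset.univ.sup fun v => (G.neighborSet v).ncard

/-!
Write `g j = j - d⁻(v_j)`. The in-neighbours of `v_j` are exactly `v_{g j}, …, v_{j-1}` and the
out-neighbours of `v_i` are `v_{i+1}, …, v_{2i - d⁻(v_i)}`. Let `m = g n`, so `n' = g m - 1`.
The vertex `v_m` dominates `v_{n'+1}, …, v_n`, which gives `γ(J_n) ≤ γ(J_{n'}) + 1`.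
Conversely, a dominating set `D` of `J_n` contains a vertex `v_w` with `w ≥ m`, since `v_n` must
be dominated. If that is the only vertex of `D` above `v_{n'}`, it has no neighbour among
`v_1, …, v_{n'}` and the rest of `D` dominates `J_{n'}`. Otherwise `D` has at least two vertices
above `v_{n'}`, and replacing them by `v_{n'}` still dominates `J_{n'}`, because the out-neighbours
of a vertex form an interval.
-/

section Domination

variable {V W : Type*} {G : SimpleGraph V}

theorem IsDomSet.insert_image {f : W → V} {D : Set W} (hD : IsDomSet (G.comap f) D) {w : V}
    (hw : ∀ v ∉ Set.range f, v ≠ w → G.Adj w v) : IsDomSet G (insert w (f '' D)) := by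
  intro v hv
  by_cases hvf : v ∈ Set.range f
  · obtain ⟨x, rfl⟩ := hvf
    have hxD : x ∉ D := fun hx => hv (Set.mem_insert_of_mem _ ⟨x, hx, rfl⟩)
    obtain ⟨u, huD, hux⟩ := hD x hxD
    exact ⟨f u, Set.mem_insert_of_mem _ ⟨u, huD, rfl⟩, hux⟩
  · exact ⟨w, Set.mem_insert _ _, hw v hvf fun h => hv (h ▸ Set.mem_insert _ _)⟩

theorem IsDomSet.preimage_union {f : W → V} {D : Set V} (hD : IsDomSet G D) {T : Set W}
    (hT : ∀ u ∈ D, u ∉ Set.range f → ∀ x ∉ T, G.Adj u (f x) → ∃ t ∈ T, G.Adj (f t) (f x)) :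
    IsDomSet (G.comap f) (f ⁻¹' D ∪ T) := by
  intro x hx
  rw [Set.mem_union, not_or] at hx
  obtain ⟨u, huD, hux⟩ := hD (f x) hx.1
  by_cases huf : u ∈ Set.range f
  · obtain ⟨y, rfl⟩ := huf
    exact ⟨y, Or.inl huD, hux⟩
  · obtain ⟨t, htT, htx⟩ := hT u huD huf x hx.2 hux
    exact ⟨t, Or.inr htT, htx⟩

variable [Fintype V] [Fintype W]

theorem domNum_le_ncard {s : Set V} (h : IsDomSet G s) : domNum G ≤ s.ncard :=
  Nat.sInf_le ⟨s, h, rfl⟩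

theorem exists_isDomSet_ncard_eq_domNum (G : SimpleGraph V) :
    ∃ s : Set V, IsDomSet G s ∧ s.ncard = domNum G :=
  Nat.sInf_mem (s := {k | ∃ s : Set V, IsDomSet G s ∧ s.ncard = k})
    ⟨_, Set.univ, fun _ hv => absurd (Set.mem_univ _) hv, rfl⟩

theorem domNum_le_domNum_comap_add_one (f : W → V) (w : V)
    (hw : ∀ v ∉ Set.range f, v ≠ w → G.Adj w v) : domNum G ≤ domNum (G.comap f) + 1 := by
  obtain ⟨D, hD, hDcard⟩ := exists_isDomSet_ncard_eq_domNum (G.comap f)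
  calc domNum G ≤ (insert w (f '' D)).ncard := domNum_le_ncard (hD.insert_image hw)
    _ ≤ (f '' D).ncard + 1 := Set.ncard_insert_le _ _
    _ ≤ domNum (G.comap f) + 1 := by rw [← hDcard]; gcongr; exact Set.ncard_image_le

theorem domNum_comap_add_ncard_diff_range_le {f : W → V} (hf : Function.Injective f)
    {D : Set V} (hD : IsDomSet G D) {T : Set W}
    (hT : ∀ u ∈ D, u ∉ Set.range f → ∀ x ∉ T, G.Adj u (f x) → ∃ t ∈ T, G.Adj (f t) (f x)) :
    domNum (G.comap f) + (D \ Set.range f).ncard ≤ D.ncard + T.ncard := by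
  have hpre : (f ⁻¹' D).ncard = (D ∩ Set.range f).ncard := by
    rw [← Set.preimage_inter_range,
      Set.ncard_preimage_of_injective_subset_range hf Set.inter_subset_right]
  have hsplit := Set.ncard_inter_add_ncard_sdiff_eq_ncard D (Set.range f)
  have hunion := Set.ncard_union_le (f ⁻¹' D) T
  have hdom := domNum_le_ncard (hD.preimage_union hT)
  omega

end Domination

section InDegree

theorem jacoInDeg_eq_card (j : ℕ) :
    jacoInDeg j = ((Finset.range j).filter fun i => j ≤ 2 * i - jacoInDeg i).card := by
  rw [jacoInDeg, Nat.strongRecOn, WellFounded.fix_eq]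
  change ((Finset.range j).attach.filter fun i => j ≤ 2 * i.1 - jacoInDeg i.1).card = _
  refine Finset.card_bij (fun a _ => a.1) ?_ (fun a _ b _ h => Subtype.ext h) ?_
  · intro a ha
    simp only [Finset.mem_filter] at ha ⊢
    exact ⟨a.2, ha.2⟩
  · intro b hb
    simp only [Finset.mem_filter, Finset.mem_range] at hb
    exact ⟨⟨b, Finset.mem_range.mpr hb.1⟩, by simpa using hb.2, rfl⟩

theorem jacoInDeg_le (j : ℕ) : jacoInDeg j ≤ j := by
  rw [jacoInDeg_eq_card]
  exact (Finset.card_filter_le _ _).trans (Finset.card_range j).le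

theorem jacoInDeg_succ_le (j : ℕ) : jacoInDeg (j + 1) ≤ jacoInDeg j + 1 := by
  rw [jacoInDeg_eq_card (j + 1), jacoInDeg_eq_card j]
  refine (Finset.card_le_card fun i hi => ?_).trans (Finset.card_insert_le j _)
  simp only [Finset.mem_filter, Finset.mem_range, Finset.mem_insert] at hi ⊢
  omega

theorem strictMono_two_mul_sub_jacoInDeg : StrictMono fun i => 2 * i - jacoInDeg i :=
  strictMono_nat_of_lt_succ fun i => by
    have := jacoInDeg_succ_le i
    have := jacoInDeg_le i
    omega

/-- The in-neighbours of `v_j` are `v_{j - d⁻(v_j)}, …, v_{j-1}`. -/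
theorem le_two_mul_sub_jacoInDeg_iff {i j : ℕ} (hij : i < j) :
    j ≤ 2 * i - jacoInDeg i ↔ j - jacoInDeg j ≤ i := by
  set S := (Finset.range j).filter fun i => j ≤ 2 * i - jacoInDeg i
  have hS : S.card = jacoInDeg j := (jacoInDeg_eq_card j).symm
  have hupper : ∀ a b, a ≤ b → b < j → a ∈ S → b ∈ S := fun a b hab hbj ha => by
    simp only [S, Finset.mem_filter, Finset.mem_range] at ha ⊢
    exact ⟨hbj, ha.2.trans (strictMono_two_mul_sub_jacoInDeg.monotone hab)⟩
  constructor
  · intro hi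
    have hsub : Finset.Ico i j ⊆ S := fun b hb => by
      rw [Finset.mem_Ico] at hb
      exact hupper i b hb.1 hb.2 (by simpa [S] using ⟨hij, hi⟩)
    have := Finset.card_le_card hsub
    rw [Nat.card_Ico] at this
    omega
  · intro hi
    by_contra hfi
    have hsub : S ⊆ Finset.Ico (i + 1) j := fun a ha => by
      have haj : a < j := by simpa [S] using (Finset.mem_filter.mp ha).1
      have hia : i < a := by
        by_contra hai
        exact hfi (by simpa [S, hij] using hupper a i (by omega) hij ha)
      exact Finset.mem_Ico.mpr ⟨hia, haj⟩
    have := Finset.card_le_card hsub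
    rw [Nat.card_Ico] at this
    omega

end InDegree

namespace JacoInf

theorem adj_iff_of_lt {a b : ℕ} (h : a < b) : JacoInf.Adj a b ↔ b ≤ 2 * a - jacoInDeg a := by
  simp only [JacoInf]
  omega

theorem adj_of_lt_of_le {a b c : ℕ} (hab : a < b) (hbc : b ≤ c) (h : JacoInf.Adj a c) :
    JacoInf.Adj a b :=
  (adj_iff_of_lt hab).mpr (hbc.trans ((adj_iff_of_lt (hab.trans_le hbc)).mp h))

theorem adj_iff_sub_jacoInDeg_le {a b : ℕ} (h : a < b) :
    JacoInf.Adj a b ↔ b - jacoInDeg b ≤ a :=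
  (adj_iff_of_lt h).trans (le_two_mul_sub_jacoInDeg_iff h)

theorem sub_jacoInDeg_le_of_adj {a b : ℕ} (h : JacoInf.Adj a b) : b - jacoInDeg b ≤ a := by
  rcases lt_or_gt_of_ne h.ne with hab | hba
  · exact (adj_iff_sub_jacoInDeg_le hab).mp h
  · omega

theorem adj_of_sub_jacoInDeg_le {m n v : ℕ} (hmn : n - jacoInDeg n ≤ m)
    (hlow : m - jacoInDeg m ≤ v) (hv : v ≤ n) (hne : v ≠ m) : JacoInf.Adj m v := by
  rcases lt_or_gt_of_ne hne with hvm | hmv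
  · exact ((adj_iff_sub_jacoInDeg_le hvm).mpr hlow).symm
  · exact adj_of_lt_of_le hmv hv ((adj_iff_sub_jacoInDeg_le (hmv.trans_le hv)).mpr hmn)

theorem not_adj_of_lt_sub_jacoInDeg {m u x : ℕ} (hx : x < m - jacoInDeg m) (hu : m ≤ u) :
    ¬ JacoInf.Adj x u := fun h =>
  have hxm : x < m := hx.trans_le (Nat.sub_le _ _)
  absurd ((adj_iff_sub_jacoInDeg_le hxm).mp (adj_of_lt_of_le hxm hu h)) (by omega)

end JacoInf

namespace Jaco

theorem comap_castLE {k n : ℕ} (h : k ≤ n) : (Jaco n).comap (Fin.castLE h) = Jaco k := rfl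

theorem domNum_le_domNum_add_one {n m k : ℕ} (hm : n - jacoInDeg n = m)
    (hk : m - jacoInDeg m - 1 = k) (hk1 : 1 ≤ k) : domNum (Jaco n) ≤ domNum (Jaco k) + 1 := by
  have hkn : k ≤ n := by omega
  rw [← comap_castLE hkn]
  refine domNum_le_domNum_comap_add_one _ ⟨m - 1, by omega⟩ fun v hv hvm => ?_
  have hv : k ≤ v := by simpa [Fin.range_castLE] using hv
  have hvm' : (v : ℕ) + 1 ≠ m := fun h => hvm (Fin.ext (show (v : ℕ) = m - 1 by omega))
  show JacoInf.Adj (m - 1 + 1) (v + 1)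
  rw [Nat.sub_add_cancel (by omega)]
  exact JacoInf.adj_of_sub_jacoInDeg_le hm.le (by omega) v.isLt hvm'

theorem adj_of_lt_of_le {n : ℕ} {x t u : Fin n} (hxt : x < t) (htu : t ≤ u)
    (h : (Jaco n).Adj x u) : (Jaco n).Adj x t :=
  JacoInf.adj_of_lt_of_le (Nat.succ_lt_succ hxt) (Nat.succ_le_succ htu) h

theorem exists_mem_sub_jacoInDeg_le {n : ℕ} (hn : 0 < n) {D : Set (Fin n)}
    (hD : IsDomSet (Jaco n) D) : ∃ w ∈ D, n - jacoInDeg n ≤ (w : ℕ) + 1 := by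
  cases n with
  | zero => omega
  | succ k =>
    by_cases hlast : Fin.last k ∈ D
    · exact ⟨_, hlast, by simp⟩
    · obtain ⟨u, huD, hu⟩ := hD _ hlast
      exact ⟨u, huD, JacoInf.sub_jacoInDeg_le_of_adj hu⟩

theorem domNum_add_one_le_domNum {n m k : ℕ} (hm : n - jacoInDeg n = m)
    (hk : m - jacoInDeg m - 1 = k) (hk1 : 1 ≤ k) : domNum (Jaco k) + 1 ≤ domNum (Jaco n) := by
  have hkn : k ≤ n := by omega
  rw [← comap_castLE hkn]
  have hR : ∀ v : Fin n, v ∈ Set.range (Fin.castLE hkn) ↔ (v : ℕ) < k := by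
    simp [Fin.range_castLE]
  obtain ⟨D, hD, hDcard⟩ := exists_isDomSet_ncard_eq_domNum (Jaco n)
  obtain ⟨w, hwD, hmw⟩ := exists_mem_sub_jacoInDeg_le (by omega) hD
  have hwR : w ∉ Set.range (Fin.castLE hkn) := by rw [hR]; omega
  by_cases honly : ∀ u ∈ D, u ∉ Set.range (Fin.castLE hkn) → u = w
  · have hle := domNum_comap_add_ncard_diff_range_le (T := ∅) (Fin.castLE_injective hkn) hD
      fun u hu huR x _ hux => by
        rw [honly u hu huR] at hux
        have hxk : ((x : ℕ) + 1) < m - jacoInDeg m := by have := x.isLt; omega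
        exact (JacoInf.not_adj_of_lt_sub_jacoInDeg hxk (hm ▸ hmw) hux.symm).elim
    have hpos : 0 < (D \ Set.range (Fin.castLE hkn)).ncard :=
      (Set.ncard_pos (Set.toFinite _)).mpr ⟨w, hwD, hwR⟩
    rw [Set.ncard_empty] at hle
    omega
  · push Not at honly
    obtain ⟨u, huD, huR, huw⟩ := honly
    have htwo : 1 < (D \ Set.range (Fin.castLE hkn)).ncard :=
      (Set.one_lt_ncard_iff (Set.toFinite _)).mpr ⟨u, w, ⟨huD, huR⟩, ⟨hwD, hwR⟩, huw⟩
    let t : Fin k := ⟨k - 1, by omega⟩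
    have hle := domNum_comap_add_ncard_diff_range_le (T := {t}) (Fin.castLE_injective hkn) hD
      fun u _ huR x hx hux => by
        have hxt : (x : ℕ) < k - 1 := by
          have := x.isLt
          have : (x : ℕ) ≠ k - 1 := fun h => hx (Fin.ext h)
          omega
        rw [hR, not_lt] at huR
        refine ⟨t, rfl, (adj_of_lt_of_le (t := Fin.castLE hkn t) hxt ?_ hux.symm).symm⟩
        exact (Nat.sub_le k 1).trans huR
    rw [Set.ncard_singleton] at hle
    omega

end Jaco

theorem jaco_domNum_recursion_general (n : ℕ)
    (hn' : 1 ≤ n - jacoInDeg n - jacoInDeg (n - jacoInDeg n) - 1) :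
    domNum (Jaco n) =
      domNum (Jaco (n - jacoInDeg n - jacoInDeg (n - jacoInDeg n) - 1)) + 1 :=
  le_antisymm (Jaco.domNum_le_domNum_add_one rfl rfl hn')
    (Jaco.domNum_add_one_le_domNum rfl rfl hn')

/-- With `n' = n - d⁻(v_n) - d⁻(v_{n - d⁻(v_n)}) - 1`, if `n' ≥ 1` then
`γ(J_n(1)) = γ(J_{n'}(1)) + 1`. -/
theorem jaco_domNum_recursion (n : ℕ) (hn : 1 ≤ n)
    (hn' : 1 ≤ n - jacoInDeg n - jacoInDeg (n - jacoInDeg n) - 1) :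
    domNum (Jaco n) =
      domNum (Jaco (n - jacoInDeg n - jacoInDeg (n - jacoInDeg n) - 1)) + 1 :=
  jaco_domNum_recursion_general n hn'
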